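/- arXiv:2401.17254 — 5 statements merged into one kernel-verified Lean document; each statement's English description precedes it below -/
import Mathlib

section
/- For every integer n with 0 ≤ n ≤ N, the probability that n lies in A + A equals 1 − (1 − p²)^((n+1)/2) if n is odd, and equals 1 − (1 − p)(1 − p²)^(n/2) if n is even. -/
open MeasureTheory Filter

/-- The Bernoulli(p) measure on `Bool`: `true` has probability `p`. -/
noncomputable def bern (p : ℝ) : Measure Bool :=
  ENNReal.ofReal p • Measure.dirac true + ENNReal.ofReal (1 - p) • Measure.dirac false

/-- The law of a random subset of `{0, …, N}` where each element is included
independently with probability `p`, encoded by indicator functions. -/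
noncomputable def prodBern (p : ℝ) (N : ℕ) : Measure (Fin (N + 1) → Bool) :=
  Measure.pi fun _ => bern p

/-- `n` belongs to the sumset `A + A`, where `A ⊆ {0,…,N}` is encoded by `ω`. -/
def inSumset {N : ℕ} (ω : Fin (N + 1) → Bool) (n : ℕ) : Prop :=
  ∃ a b : Fin (N + 1), ω a = true ∧ ω b = true ∧ (a : ℕ) + (b : ℕ) = n

/-- `Y`: the number of integers in `{0,…,N}` missing from `A + A`. -/
noncomputable def Ycount (N : ℕ) (ω : Fin (N + 1) → Bool) : ℕ :=
  {n : ℕ | n ≤ N ∧ ¬ inSumset ω n}.ncard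

/-- `Z`: the number of integers in `{N+1,…,2N}` missing from `A + A`. -/
noncomputable def Zcount (N : ℕ) (ω : Fin (N + 1) → Bool) : ℕ :=
  {n : ℕ | N + 1 ≤ n ∧ n ≤ 2 * N ∧ ¬ inSumset ω n}.ncard

/-- `W`: the number of integers in `{0,…,2N}` missing from `A + A`. -/
noncomputable def Wcount (N : ℕ) (ω : Fin (N + 1) → Bool) : ℕ :=
  {n : ℕ | n ≤ 2 * N ∧ ¬ inSumset ω n}.ncard

/-- `Ỹ`: the number of integers in `{0,…,⌊N/2⌋}` missing from `A + A`. -/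
noncomputable def Ytilde (N : ℕ) (ω : Fin (N + 1) → Bool) : ℕ :=
  {n : ℕ | n ≤ N / 2 ∧ ¬ inSumset ω n}.ncard

/-- `Z̃`: the number of integers in `{⌊3N/2⌋+1,…,2N}` missing from `A + A`. -/
noncomputable def Ztilde (N : ℕ) (ω : Fin (N + 1) → Bool) : ℕ :=
  {n : ℕ | 3 * N / 2 + 1 ≤ n ∧ n ≤ 2 * N ∧ ¬ inSumset ω n}.ncard

/-- A string of `k` bits has no two consecutive ones. -/
def noTwoOnes {k : ℕ} (x : Fin k → Bool) : Prop :=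
  ∀ i : ℕ, ∀ hi : i + 1 < k, ¬(x ⟨i, Nat.lt_of_succ_lt hi⟩ = true ∧ x ⟨i + 1, hi⟩ = true)

/-- `a_k`: the probability that `k` i.i.d. Bernoulli(p) bits contain no two
consecutive 1's (with `a_0 = 1`). -/
noncomputable def aseq (p : ℝ) (k : ℕ) : ℝ :=
  ((Measure.pi fun _ : Fin k => bern p) {x | noTwoOnes x}).toReal

/-- If `A` depends only on coordinates in `S` and `B` only on coordinates outside `S`,
then they are independent under a product probability measure. -/
lemma pi_inter_indep {ι : Type*} [Fintype ι] {α : ι → Type*} [∀ i, MeasurableSpace (α i)]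
    [∀ i, Inhabited (α i)]
    (μ : ∀ i, Measure (α i)) [∀ i, IsProbabilityMeasure (μ i)]
    (S : Set ι) (A B : Set (∀ i, α i))
    (hAm : MeasurableSet A) (hBm : MeasurableSet B)
    (hA : ∀ ω ω' : ∀ i, α i, (∀ i ∈ S, ω i = ω' i) → ω ∈ A → ω' ∈ A)
    (hB : ∀ ω ω' : ∀ i, α i, (∀ i ∉ S, ω i = ω' i) → ω ∈ B → ω' ∈ B) :
    Measure.pi μ (A ∩ B) = Measure.pi μ A * Measure.pi μ B := by
  classical
  set e := MeasurableEquiv.piEquivPiSubtypeProd α (· ∈ S) with he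
  have mp := measurePreserving_piEquivPiSubtypeProd μ (· ∈ S)
  have mps := mp.symm
  set ν := (Measure.pi fun i : {i // i ∈ S} => μ i).prod
      (Measure.pi fun i : {i // i ∉ S} => μ i) with hν
  have key : ∀ T : Set (∀ i, α i), MeasurableSet T → Measure.pi μ T = ν (e.symm ⁻¹' T) := by
    intro T hT
    rw [← mps.map_eq, Measure.map_apply (MeasurableEquiv.measurable _) hT]
  -- sections
  set A₁ : Set (∀ i : {i // i ∈ S}, α i) :=
    {x | e.symm (x, fun i => default) ∈ A} with hA₁
  set B₁ : Set (∀ i : {i // i ∉ S}, α i) :=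
    {y | e.symm ((fun i => default), y) ∈ B} with hB₁
  have hsymm : ∀ (x : ∀ i : {i // i ∈ S}, α i) (y : ∀ i : {i // i ∉ S}, α i) (i : ι),
      e.symm (x, y) i = if h : i ∈ S then x ⟨i, h⟩ else y ⟨i, h⟩ := by
    intro x y i
    rfl
  have hAiff : ∀ x y, e.symm (x, y) ∈ A ↔ x ∈ A₁ := by
    intro x y
    constructor
    · intro h; exact hA _ _ (fun i hi => by simp [hsymm, hi]) h
    · intro h; exact hA _ _ (fun i hi => by simp [hsymm, hi]) h
  have hBiff : ∀ x y, e.symm (x, y) ∈ B ↔ y ∈ B₁ := by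
    intro x y
    constructor
    · intro h; exact hB _ _ (fun i hi => by simp [hsymm, hi]) h
    · intro h; exact hB _ _ (fun i hi => by simp [hsymm, hi]) h
  have h1 : e.symm ⁻¹' (A ∩ B) = A₁ ×ˢ B₁ := by
    ext ⟨x, y⟩
    simp only [Set.mem_preimage, Set.mem_inter_iff, Set.mem_prod, hAiff, hBiff]
  have h2 : e.symm ⁻¹' A = A₁ ×ˢ Set.univ := by
    ext ⟨x, y⟩; simp [hAiff x y]
  have h3 : e.symm ⁻¹' B = Set.univ ×ˢ B₁ := by
    ext ⟨x, y⟩; simp [hBiff x y]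
  rw [key _ (hAm.inter hBm), key _ hAm, key _ hBm, h1, h2, h3,
    Measure.prod_prod, Measure.prod_prod, Measure.prod_prod]
  simp [mul_comm, mul_assoc, mul_left_comm]

lemma pi_biInter_prod {ι : Type*} [Fintype ι] {α : ι → Type*} [∀ i, MeasurableSpace (α i)]
    [∀ i, Inhabited (α i)]
    (μ : ∀ i, Measure (α i)) [∀ i, IsProbabilityMeasure (μ i)]
    {β : Type*} (s : Finset β) (T : β → Set ι) (C : β → Set (∀ i, α i))
    (hm : ∀ b, MeasurableSet (C b))
    (hdep : ∀ b, ∀ ω ω' : ∀ i, α i, (∀ i ∈ T b, ω i = ω' i) → ω ∈ C b → ω' ∈ C b)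
    (hdisj : ∀ b ∈ s, ∀ b' ∈ s, b ≠ b' → Disjoint (T b) (T b')) :
    Measure.pi μ (⋂ b ∈ s, C b) = ∏ b ∈ s, Measure.pi μ (C b) := by
  classical
  induction s using Finset.induction with
  | empty => simp
  | @insert a s hb ih =>
    rw [Finset.prod_insert hb, ← ih (fun b hbs b' hb's hne =>
      hdisj b (Finset.mem_insert_of_mem hbs) b' (Finset.mem_insert_of_mem hb's) hne)]
    have hset : (⋂ b ∈ insert a s, C b) = C a ∩ ⋂ b ∈ s, C b := by
      simp [Set.biInter_insert]
    rw [hset]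
    refine pi_inter_indep μ (T a) (C a) (⋂ b ∈ s, C b) (hm a)
      (MeasurableSet.biInter s.countable_toSet (fun b _ => hm b)) (hdep a) ?_
    intro ω ω' hagree hω
    simp only [Set.mem_iInter] at hω ⊢
    intro b hbs
    refine hdep b ω ω' (fun i hi => ?_) (hω b hbs)
    refine hagree i ?_
    exact fun hiTa => (hdisj a (Finset.mem_insert_self a s) b
      (Finset.mem_insert_of_mem hbs) (fun h => hb (h ▸ hbs))).ne_of_mem hiTa hi rfl

lemma bern_apply_true (p : ℝ) : bern p {true} = ENNReal.ofReal p := by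
  simp [bern, Measure.dirac_apply]

lemma bern_isProb (p : ℝ) (h0 : 0 ≤ p) (h1 : p ≤ 1) : IsProbabilityMeasure (bern p) := by
  constructor
  simp [bern, Measure.dirac_apply]
  rw [← ENNReal.ofReal_add h0 (by linarith)]
  simp

lemma prodBern_isProb (p : ℝ) (h0 : 0 ≤ p) (h1 : p ≤ 1) (N : ℕ) : IsProbabilityMeasure (prodBern p N) := by
  haveI := bern_isProb p h0 h1
  unfold prodBern; infer_instance

lemma measure_single (p : ℝ) (h0 : 0 ≤ p) (h1 : p ≤ 1) (N : ℕ) (i : Fin (N + 1)) :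
    prodBern p N {ω | ω i = true} = ENNReal.ofReal p := by
  classical
  haveI := bern_isProb p h0 h1
  have hset : {ω : Fin (N + 1) → Bool | ω i = true} =
      Set.pi Set.univ (fun k => if k = i then {true} else Set.univ) := by
    ext ω
    simp only [Set.mem_setOf_eq, Set.mem_pi, Set.mem_univ, forall_true_left]
    constructor
    · intro h k
      by_cases hk : k = i <;> simp [hk, h]
    · intro h
      have := h i
      simpa using this
  rw [hset]
  unfold prodBern
  rw [Measure.pi_pi]
  have : ∀ k : Fin (N + 1), bern p (if k = i then {true} else Set.univ) =
      if k = i then ENNReal.ofReal p else 1 := by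
    intro k
    by_cases hk : k = i
    · simp [hk, bern_apply_true]
    · rw [if_neg hk, if_neg hk]; exact measure_univ
  rw [Finset.prod_congr rfl (fun k _ => this k)]
  simp

lemma measure_pair (p : ℝ) (h0 : 0 ≤ p) (h1 : p ≤ 1) (N : ℕ) (i j : Fin (N + 1)) (hij : i ≠ j) :
    prodBern p N {ω | ω i = true ∧ ω j = true} = ENNReal.ofReal p * ENNReal.ofReal p := by
  classical
  haveI := bern_isProb p h0 h1
  have hset : {ω : Fin (N + 1) → Bool | ω i = true ∧ ω j = true} =
      {ω | ω i = true} ∩ {ω | ω j = true} := rfl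
  have hsplit : prodBern p N ({ω | ω i = true} ∩ {ω | ω j = true}) =
      prodBern p N {ω | ω i = true} * prodBern p N {ω | ω j = true} :=
    pi_inter_indep (fun _ => bern p) ({i} : Set (Fin (N + 1)))
      _ _ MeasurableSet.of_discrete MeasurableSet.of_discrete
      (fun ω ω' hag h => by
        simp only [Set.mem_setOf_eq] at h ⊢
        rw [← hag i (Set.mem_singleton i)]; exact h)
      (fun ω ω' hag h => by
        simp only [Set.mem_setOf_eq] at h ⊢
        rw [← hag j (by simpa using hij.symm)]; exact h)
  rw [hset, hsplit, measure_single p h0 h1 N i, measure_single p h0 h1 N j]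


lemma measure_pairC (p : ℝ) (h0 : 0 ≤ p) (h1 : p ≤ 1) (N : ℕ) (i j : Fin (N + 1))
    (hij : i ≠ j) :
    prodBern p N {ω | ¬(ω i = true ∧ ω j = true)} = ENNReal.ofReal (1 - p ^ 2) := by
  haveI := prodBern_isProb p h0 h1 N
  have hset : {ω : Fin (N + 1) → Bool | ¬(ω i = true ∧ ω j = true)} =
      {ω | ω i = true ∧ ω j = true}ᶜ := rfl
  rw [hset, prob_compl_eq_one_sub MeasurableSet.of_discrete, measure_pair p h0 h1 N i j hij,
    ← ENNReal.ofReal_mul h0, ENNReal.ofReal_sub 1 (by positivity), ENNReal.ofReal_one]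
  ring_nf

lemma measure_singleC (p : ℝ) (h0 : 0 ≤ p) (h1 : p ≤ 1) (N : ℕ) (i : Fin (N + 1)) :
    prodBern p N {ω | ¬(ω i = true ∧ ω i = true)} = ENNReal.ofReal (1 - p) := by
  haveI := prodBern_isProb p h0 h1 N
  have hset : {ω : Fin (N + 1) → Bool | ¬(ω i = true ∧ ω i = true)} =
      {ω | ω i = true}ᶜ := by
    ext ω; simp
  rw [hset, prob_compl_eq_one_sub MeasurableSet.of_discrete, measure_single p h0 h1 N i,
    ENNReal.ofReal_sub 1 h0, ENNReal.ofReal_one]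

/-- For `0 ≤ n ≤ N`, the probability that `n ∈ A + A` is
`1 - (1-p²)^((n+1)/2)` for odd `n` and `1 - (1-p)(1-p²)^(n/2)` for even `n`. -/
theorem stmt0 (p : ℝ) (hp0 : 0 < p) (hp1 : p < 1) (N n : ℕ) (hn : n ≤ N) :
    (prodBern p N {ω | inSumset ω n}).toReal =
      if Odd n then 1 - (1 - p ^ 2) ^ ((n + 1) / 2)
      else 1 - (1 - p) * (1 - p ^ 2) ^ (n / 2) := by
  classical
  haveI := prodBern_isProb p hp0.le hp1.le N
  set m := n / 2 with hm
  set coord : ℕ → Fin (N + 1) := fun k => ⟨min k N, by omega⟩ with hcoord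
  have hcoordval : ∀ k : ℕ, k ≤ N → ((coord k : Fin (N + 1)) : ℕ) = k := by
    intro k hk; simp [hcoord, hk]
  set C : ℕ → Set (Fin (N + 1) → Bool) :=
    fun a => {ω | ¬(ω (coord a) = true ∧ ω (coord (n - a)) = true)} with hC
  -- complement identity
  have hEc : {ω : Fin (N + 1) → Bool | inSumset ω n}ᶜ = ⋂ a ∈ Finset.range (m + 1), C a := by
    ext ω
    simp only [Set.mem_compl_iff, Set.mem_setOf_eq, Set.mem_iInter, Finset.mem_range, hC]
    constructor
    · intro h a ha
      rintro ⟨h1', h2'⟩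
      exact h ⟨coord a, coord (n - a), h1', h2', by
        rw [hcoordval a (by omega), hcoordval (n - a) (by omega)]; omega⟩
    · rintro h ⟨a, b, ha, hb, hab⟩
      rcases le_total (a : ℕ) (b : ℕ) with hle | hle
      · refine h a.val (by omega) ⟨?_, ?_⟩
        · have : coord a.val = a := by
            apply Fin.ext; rw [hcoordval a.val (by omega)]
          rw [this]; exact ha
        · have : coord (n - a.val) = b := by
            apply Fin.ext; rw [hcoordval (n - a.val) (by omega)]; omega
          rw [this]; exact hb
      · refine h b.val (by omega) ⟨?_, ?_⟩
        · have : coord b.val = b := by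
            apply Fin.ext; rw [hcoordval b.val (by omega)]
          rw [this]; exact hb
        · have : coord (n - b.val) = a := by
            apply Fin.ext; rw [hcoordval (n - b.val) (by omega)]; omega
          rw [this]; exact ha
  -- product formula
  haveI := bern_isProb p hp0.le hp1.le
  have hprod : prodBern p N (⋂ a ∈ Finset.range (m + 1), C a) =
      ∏ a ∈ Finset.range (m + 1), prodBern p N (C a) := by
    refine pi_biInter_prod (fun _ => bern p) (Finset.range (m + 1))
      (fun a => {coord a, coord (n - a)}) C
      (fun _ => MeasurableSet.of_discrete) ?_ ?_
    · intro a ω ω' hag hω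
      simp only [hC, Set.mem_setOf_eq] at hω ⊢
      rw [← hag (coord a) (by simp), ← hag (coord (n - a)) (by simp)]
      exact hω
    · intro a ha b hb hne
      simp only [Finset.mem_range] at ha hb
      rw [Set.disjoint_left]
      rintro x hx hx'
      have e1 : (x : ℕ) = a ∨ (x : ℕ) = n - a := by
        rcases hx with h | h
        · left; rw [h]; exact hcoordval a (by omega)
        · right; rw [Set.mem_singleton_iff] at h; rw [h]; exact hcoordval (n - a) (by omega)
      have e2 : (x : ℕ) = b ∨ (x : ℕ) = n - b := by
        rcases hx' with h | h
        · left; rw [h]; exact hcoordval b (by omega)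
        · right; rw [Set.mem_singleton_iff] at h; rw [h]; exact hcoordval (n - b) (by omega)
      omega
  -- value of each factor
  have hval : ∀ a, a < m + 1 → prodBern p N (C a) =
      if 2 * a = n then ENNReal.ofReal (1 - p) else ENNReal.ofReal (1 - p ^ 2) := by
    intro a ha
    by_cases h2 : 2 * a = n
    · have hna : n - a = a := by omega
      rw [if_pos h2]
      have : C a = {ω | ¬(ω (coord a) = true ∧ ω (coord a) = true)} := by
        simp only [hC, hna]
      rw [this]
      exact measure_singleC p hp0.le hp1.le N (coord a)
    · rw [if_neg h2]
      refine measure_pairC p hp0.le hp1.le N (coord a) (coord (n - a)) ?_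
      intro hEq
      have hv : a ⊓ N = (n - a) ⊓ N := congrArg Fin.val hEq
      omega
  -- the complement measure
  set r : ℝ := if Odd n then (1 - p ^ 2) ^ ((n + 1) / 2) else (1 - p) * (1 - p ^ 2) ^ (n / 2)
    with hr
  have hq0 : (0:ℝ) ≤ 1 - p ^ 2 := by nlinarith
  have hq1 : (1:ℝ) - p ^ 2 ≤ 1 := by nlinarith
  have hr0 : 0 ≤ r := by
    rw [hr]; split
    · positivity
    · have : (0:ℝ) ≤ 1 - p := by linarith
      positivity
  have hr1 : r ≤ 1 := by
    rw [hr]; split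
    · exact pow_le_one₀ hq0 hq1
    · exact mul_le_one₀ (by linarith) (by positivity) (pow_le_one₀ hq0 hq1)
  have hEcval : prodBern p N {ω : Fin (N + 1) → Bool | inSumset ω n}ᶜ = ENNReal.ofReal r := by
    rw [hEc, hprod]
    by_cases hodd : Odd n
    · have hall : ∀ a ∈ Finset.range (m + 1), prodBern p N (C a) =
          ENNReal.ofReal (1 - p ^ 2) := by
        intro a ha
        simp only [Finset.mem_range] at ha
        obtain ⟨t, ht⟩ := hodd
        rw [hval a ha, if_neg (by omega)]
      rw [Finset.prod_congr rfl hall, Finset.prod_const, Finset.card_range,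
        ← ENNReal.ofReal_pow hq0]
      obtain ⟨t, ht⟩ := hodd
      have : m + 1 = (n + 1) / 2 := by omega
      rw [this, hr, if_pos ⟨t, ht⟩]
    · have heven : 2 * m = n := by
        obtain ⟨t, ht⟩ := Nat.not_odd_iff_even.mp hodd
        omega
      rw [Finset.prod_range_succ]
      have hall : ∀ a ∈ Finset.range m, prodBern p N (C a) =
          ENNReal.ofReal (1 - p ^ 2) := by
        intro a ha
        simp only [Finset.mem_range] at ha
        rw [hval a (by omega), if_neg (by omega)]
      rw [Finset.prod_congr rfl hall, Finset.prod_const, Finset.card_range,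
        hval m (by omega), if_pos heven, ← ENNReal.ofReal_pow hq0,
        ← ENNReal.ofReal_mul (by positivity), hr, if_neg hodd, mul_comm]
  have hE : prodBern p N {ω : Fin (N + 1) → Bool | inSumset ω n} = 1 - ENNReal.ofReal r := by
    rw [← compl_compl {ω : Fin (N + 1) → Bool | inSumset ω n},
      prob_compl_eq_one_sub MeasurableSet.of_discrete, hEcval]
  rw [hE, ← ENNReal.ofReal_one, ← ENNReal.ofReal_sub 1 hr0, ENNReal.toReal_ofReal (by linarith)]
  rw [hr]
  split <;> rfl
end

section
/- The expected number of missing summands in the left fringe satisfies E[Y] = (2/p² − 1/p − 1) − (√(1 − p²))^N · C, where C = (2 − p)(1 − p²)/p² if N is even and C = (2 − p − p²)√(1 − p²)/p² if N is odd. -/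
open MeasureTheory Filter

/-!
An integer `n ≤ N` is missing from `A + A` exactly when none of the sets `{k, n - k}`,
`k ≤ n / 2`, is contained in `A`. These sets are pairwise disjoint, so under the product measure
the corresponding events are independent: `n / 2` of them are genuine pairs, avoided with
probability `1 - p²`, and the last one is the singleton `{n / 2}` (probability `1 - p`) when `n`
is even and one more pair when `n` is odd. Summing these probabilities over `n ≤ N` gives `E[Y]`
as two interleaved geometric series in `1 - p²`.
-/

open ProbabilityTheory Fin.NatCast

lemma preimage_image_restrict_of_dependsOn {ι : Type*} {α : ι → Type*} {s : Finset ι}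
    {E : Set (∀ i, α i)} (hE : DependsOn (· ∈ E) s) :
    (fun ω (i : s) ↦ ω i) ⁻¹' ((fun ω (i : s) ↦ ω i) '' E) = E := by
  refine subset_antisymm ?_ (Set.subset_preimage_image _ _)
  rintro x ⟨y, hy, hyx⟩
  exact (hE fun i hi ↦ congrFun hyx ⟨i, hi⟩).mp hy

section DependsOn

variable {ι : Type*} [Fintype ι] {α : ι → Type*} [∀ i, MeasurableSpace (α i)]
  [∀ i, Countable (α i)] [∀ i, MeasurableSingletonClass (α i)]
  {μ : ∀ i, Measure (α i)} [∀ i, IsProbabilityMeasure (μ i)]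

theorem measure_pi_inter_of_dependsOn {s t : Finset ι} (hst : Disjoint s t)
    {E F : Set (∀ i, α i)} (hE : DependsOn (· ∈ E) s) (hF : DependsOn (· ∈ F) t) :
    Measure.pi μ (E ∩ F) = Measure.pi μ E * Measure.pi μ F := by
  have hindep : iIndepFun (fun i ω ↦ ω i) (Measure.pi μ) :=
    iIndepFun_pi (X := fun _ ↦ id) fun _ ↦ aemeasurable_id
  rw [← preimage_image_restrict_of_dependsOn hE, ← preimage_image_restrict_of_dependsOn hF]
  exact (hindep.indepFun_finset s t hst measurable_pi_apply).measure_inter_preimage_eq_mul _ _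
    .of_discrete .of_discrete

theorem measure_pi_biInter_of_dependsOn {κ : Type*} (J : Finset κ) {s : κ → Finset ι}
    (hs : (J : Set κ).PairwiseDisjoint s) {E : κ → Set (∀ i, α i)}
    (hE : ∀ j ∈ J, DependsOn (· ∈ E j) (s j)) :
    Measure.pi μ (⋂ j ∈ J, E j) = ∏ j ∈ J, Measure.pi μ (E j) := by
  classical
  induction J using Finset.induction_on with
  | empty => simp
  | insert j J hj ih =>
    rw [Finset.set_biInter_insert, Finset.prod_insert hj,
      ← ih (hs.subset (by simp)) fun k hk ↦ hE k (by simp [hk])]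
    refine measure_pi_inter_of_dependsOn (t := J.biUnion s) ?_ (hE j (by simp)) ?_
    · exact (Finset.disjoint_biUnion_right _ _ _).2 fun k hk ↦
        hs (by simp) (by simp [hk]) (ne_of_mem_of_not_mem hk hj).symm
    · intro x y hxy
      simp only [Set.mem_iInter, eq_iff_iff]
      refine forall₂_congr fun k (hk : k ∈ J) ↦ Iff.of_eq <| hE k (by simp [hk]) fun i hi ↦ ?_
      exact hxy i (by simpa using ⟨k, hk, hi⟩)

end DependsOn

section Bernoulli

variable {p : ℝ}

lemma isProbabilityMeasure_bern (hp0 : 0 ≤ p) (hp1 : p ≤ 1) : IsProbabilityMeasure (bern p) :=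
  ⟨by simp [bern, ← ENNReal.ofReal_add hp0 (sub_nonneg.2 hp1)]⟩

lemma isProbabilityMeasure_prodBern (hp0 : 0 ≤ p) (hp1 : p ≤ 1) (N : ℕ) :
    IsProbabilityMeasure (prodBern p N) := by
  have := isProbabilityMeasure_bern hp0 hp1
  unfold prodBern
  infer_instance

lemma prodBern_real_eq_true (hp0 : 0 ≤ p) (hp1 : p ≤ 1) {N : ℕ} (i : Fin (N + 1)) :
    (prodBern p N).real {ω | ω i = true} = p := by
  have := isProbabilityMeasure_bern hp0 hp1
  have hpre : {ω : Fin (N + 1) → Bool | ω i = true} = Function.eval i ⁻¹' ({true} : Set Bool) := rfl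
  rw [measureReal_def, prodBern, hpre, (measurePreserving_eval (fun _ ↦ bern p) i).measure_preimage
    MeasurableSet.of_discrete.nullMeasurableSet]
  simp [bern, hp0]

lemma prodBern_real_not_and (hp0 : 0 ≤ p) (hp1 : p ≤ 1) {N : ℕ} (i j : Fin (N + 1)) :
    (prodBern p N).real {ω | ¬(ω i = true ∧ ω j = true)} = if i = j then 1 - p else 1 - p ^ 2 := by
  have := isProbabilityMeasure_bern hp0 hp1
  have := isProbabilityMeasure_prodBern hp0 hp1 N
  rw [← Set.compl_ofPred, probReal_compl_eq_one_sub (.of_discrete)]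
  split_ifs with hij
  · simp [hij, prodBern_real_eq_true hp0 hp1]
  · have hdep (k : Fin (N + 1)) :
        DependsOn (· ∈ {ω : Fin (N + 1) → Bool | ω k = true}) ({k} : Finset _) :=
      fun x y hxy ↦ by simp [hxy k (by simp)]
    rw [Set.ofPred_and, measureReal_def, prodBern,
      measure_pi_inter_of_dependsOn (Finset.disjoint_singleton.2 hij) (hdep i) (hdep j),
      ENNReal.toReal_mul, ← measureReal_def, ← measureReal_def, ← prodBern,
      prodBern_real_eq_true hp0 hp1, prodBern_real_eq_true hp0 hp1]
    ring

end Bernoulli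

lemma Fin.val_natCast_of_le {N i : ℕ} (hi : i ≤ N) : ((i : Fin (N + 1)) : ℕ) = i :=
  Fin.val_cast_of_lt (Nat.lt_succ_of_le hi)

noncomputable def probNotInSumset (p : ℝ) (n : ℕ) : ℝ :=
  (1 - p ^ 2) ^ (n / 2) * if Even n then 1 - p else 1 - p ^ 2

lemma prod_range_ite_two_mul_eq (p : ℝ) (n : ℕ) :
    ∏ k ∈ Finset.range (n / 2 + 1), (if 2 * k = n then 1 - p else 1 - p ^ 2) =
      probNotInSumset p n := by
  rw [Finset.prod_range_succ,
    Finset.prod_congr rfl fun k hk ↦ if_neg (by have := Finset.mem_range.1 hk; omega),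
    Finset.prod_const, Finset.card_range, probNotInSumset]
  congr 2
  exact propext (Nat.even_iff.trans (by omega)).symm

section Sumset

variable {N : ℕ} {p : ℝ}

lemma not_inSumset_iff {n : ℕ} (hn : n ≤ N) (ω : Fin (N + 1) → Bool) :
    ¬ inSumset ω n ↔
      ∀ k ∈ Finset.range (n / 2 + 1), ¬(ω k = true ∧ ω (n - k : ℕ) = true) := by
  simp only [inSumset, not_exists, Finset.mem_range]
  constructor
  · intro h k hk hω
    refine h k (n - k : ℕ) ⟨hω.1, hω.2, ?_⟩
    rw [Fin.val_natCast_of_le (by omega), Fin.val_natCast_of_le (by omega)]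
    omega
  · rintro h a b ⟨ha, hb, hab⟩
    have hpartner : ∀ c d : Fin (N + 1), (c : ℕ) + d = n → ((n - c : ℕ) : Fin (N + 1)) = d :=
      fun c d hcd ↦ Fin.ext (by rw [Fin.val_natCast_of_le (by omega)]; omega)
    rcases le_total (2 * (a : ℕ)) n with h2a | h2b
    · exact h a (by omega) (by rw [Fin.cast_val_eq_self, hpartner a b hab]; exact ⟨ha, hb⟩)
    · exact h b (by omega) (by rw [Fin.cast_val_eq_self, hpartner b a (by omega)]; exact ⟨hb, ha⟩)

lemma prodBern_real_not_inSumset (hp0 : 0 ≤ p) (hp1 : p ≤ 1) {n : ℕ} (hn : n ≤ N) :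
    (prodBern p N).real {ω | ¬ inSumset ω n} = probNotInSumset p n := by
  have := isProbabilityMeasure_bern hp0 hp1
  have hv : ∀ i ≤ n, ((i : Fin (N + 1)) : ℕ) = i := fun i hi ↦ Fin.val_natCast_of_le (by omega)
  let pair : ℕ → Finset (Fin (N + 1)) := fun k ↦ {(k : Fin (N + 1)), ((n - k : ℕ) : Fin (N + 1))}
  have hdisj : (Finset.range (n / 2 + 1) : Set ℕ).PairwiseDisjoint pair := by
    intro k hk l hl hkl
    simp only [Finset.coe_range, Set.mem_Iio] at hk hl
    simp only [Function.onFun, pair, Finset.disjoint_insert_left, Finset.disjoint_insert_right,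
      Finset.disjoint_singleton, Finset.mem_insert, Finset.mem_singleton, ne_eq, Fin.ext_iff,
      hv k (by omega), hv l (by omega), hv (n - k) (by omega), hv (n - l) (by omega)]
    omega
  have hdep : ∀ k ∈ Finset.range (n / 2 + 1),
      DependsOn (· ∈ {ω : Fin (N + 1) → Bool | ¬(ω k = true ∧ ω (n - k : ℕ) = true)}) (pair k) :=
    fun k _ x y hxy ↦ by simp [hxy k (by simp [pair]), hxy (n - k : ℕ) (by simp [pair])]
  have hset : {ω : Fin (N + 1) → Bool | ¬ inSumset ω n} =
      ⋂ k ∈ Finset.range (n / 2 + 1), {ω | ¬(ω k = true ∧ ω (n - k : ℕ) = true)} := by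
    ext ω
    simp [not_inSumset_iff hn]
  rw [hset, measureReal_def, prodBern, measure_pi_biInter_of_dependsOn _ hdisj hdep,
    ENNReal.toReal_prod, ← prod_range_ite_two_mul_eq]
  refine Finset.prod_congr rfl fun k hk ↦ ?_
  rw [← measureReal_def, ← prodBern, prodBern_real_not_and hp0 hp1]
  simp only [Finset.mem_range] at hk
  simp only [Fin.ext_iff, hv k (by omega), hv (n - k) (by omega)]
  congr 1
  exact propext (by omega)

end Sumset

lemma Ycount_eq_sum_indicator (N : ℕ) (ω : Fin (N + 1) → Bool) :
    (Ycount N ω : ℝ) =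
      ∑ n ∈ Finset.range (N + 1), {ω' : Fin (N + 1) → Bool | ¬ inSumset ω' n}.indicator 1 ω := by
  classical
  have hY : {n : ℕ | n ≤ N ∧ ¬ inSumset ω n} =
      ((Finset.range (N + 1)).filter fun n ↦ ¬ inSumset ω n : Finset ℕ) := by
    ext n
    simp
  rw [Ycount, hY, Set.ncard_coe_finset, Finset.card_filter, Nat.cast_sum]
  refine Finset.sum_congr rfl fun n _ ↦ ?_
  by_cases hn : inSumset ω n <;> simp [hn]

lemma integral_Ycount {p : ℝ} (hp0 : 0 ≤ p) (hp1 : p ≤ 1) (N : ℕ) :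
    ∫ ω, (Ycount N ω : ℝ) ∂prodBern p N = ∑ n ∈ Finset.range (N + 1), probNotInSumset p n := by
  have := isProbabilityMeasure_prodBern hp0 hp1 N
  simp_rw [Ycount_eq_sum_indicator N]
  rw [integral_finsetSum _ fun n _ ↦ (integrable_const 1).indicator .of_discrete]
  refine Finset.sum_congr rfl fun n hn ↦ ?_
  rw [integral_indicator_one .of_discrete,
    prodBern_real_not_inSumset hp0 hp1 (Nat.lt_succ_iff.1 (Finset.mem_range.1 hn))]

lemma sum_range_probNotInSumset {p : ℝ} (hp : p ≠ 0) (N : ℕ) :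
    ∑ n ∈ Finset.range (N + 1), probNotInSumset p n =
      2 / p ^ 2 - 1 / p - 1 -
        (1 - p ^ 2) ^ (N / 2 + 1) * (if Even N then 2 - p else 2 - p - p ^ 2) / p ^ 2 := by
  induction N with
  | zero =>
    rw [Finset.sum_range_one, probNotInSumset, if_pos Even.zero, if_pos Even.zero]
    field_simp
    ring
  | succ N ih =>
    rw [Finset.sum_range_succ, ih, probNotInSumset]
    rcases Nat.even_or_odd' N with ⟨m, rfl | rfl⟩
    · have hodd := Nat.not_even_two_mul_add_one m
      rw [if_pos (even_two_mul m), if_neg hodd, if_neg hodd, show 2 * m / 2 = m by omega,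
        show (2 * m + 1) / 2 = m by omega]
      field_simp
      ring
    · have heven : Even (2 * m + 1 + 1) := Nat.even_add_one.2 (Nat.not_even_two_mul_add_one m)
      rw [if_neg (Nat.not_even_two_mul_add_one m), if_pos heven, if_pos heven,
        show (2 * m + 1) / 2 = m by omega, show (2 * m + 1 + 1) / 2 = m + 1 by omega]
      field_simp
      ring

lemma sqrt_one_sub_sq_pow_mul_ite {p : ℝ} (hp : p ^ 2 ≤ 1) (N : ℕ) :
    Real.sqrt (1 - p ^ 2) ^ N *
        (if Even N then (2 - p) * (1 - p ^ 2) / p ^ 2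
         else (2 - p - p ^ 2) * Real.sqrt (1 - p ^ 2) / p ^ 2) =
      (1 - p ^ 2) ^ (N / 2 + 1) * (if Even N then 2 - p else 2 - p - p ^ 2) / p ^ 2 := by
  have hsq : Real.sqrt (1 - p ^ 2) ^ 2 = 1 - p ^ 2 := Real.sq_sqrt (sub_nonneg.2 hp)
  rcases Nat.even_or_odd' N with ⟨m, rfl | rfl⟩
  · rw [if_pos (even_two_mul m), if_pos (even_two_mul m), pow_mul, hsq,
      show 2 * m / 2 + 1 = m + 1 by omega]
    ring
  · rw [if_neg (Nat.not_even_two_mul_add_one m), if_neg (Nat.not_even_two_mul_add_one m),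
      pow_succ, pow_mul, hsq, show (2 * m + 1) / 2 + 1 = m + 1 by omega]
    linear_combination (1 - p ^ 2) ^ m * (2 - p - p ^ 2) / p ^ 2 * hsq

/-- The expected number of missing summands in the left fringe. -/
theorem stmt1 (p : ℝ) (hp0 : 0 < p) (hp1 : p < 1) (N : ℕ) :
    (∫ ω, (Ycount N ω : ℝ) ∂ prodBern p N) =
      (2 / p ^ 2 - 1 / p - 1) -
        Real.sqrt (1 - p ^ 2) ^ N *
          (if Even N then (2 - p) * (1 - p ^ 2) / p ^ 2
           else (2 - p - p ^ 2) * Real.sqrt (1 - p ^ 2) / p ^ 2) := by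
  rw [integral_Ycount hp0.le hp1.le, sum_range_probNotInSumset hp0.ne',
    sqrt_one_sub_sq_pow_mul_ite (by nlinarith)]
end

section
/- For every even integer n with 0 < n ≤ N, the probability of missing at least n summands in the left fringe satisfies P(Y ≥ n) ≥ (1 − p)^(n/2). -/
open MeasureTheory Filter

lemma bern_isProb_s9 (p : ℝ) (hp0 : 0 ≤ p) (hp1 : p ≤ 1) : IsProbabilityMeasure (bern p) := by
  constructor
  simp only [bern, Measure.add_apply, Measure.smul_apply, Measure.dirac_apply' _ MeasurableSet.univ,
    Set.indicator_univ, smul_eq_mul, Pi.one_apply, mul_one]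
  rw [← ENNReal.ofReal_add hp0 (by linarith)]
  norm_num

lemma bern_false (p : ℝ) : bern p {false} = ENNReal.ofReal (1 - p) := by
  simp only [bern, Measure.add_apply, Measure.smul_apply, smul_eq_mul]
  rw [Measure.dirac_apply' _ (by trivial), Measure.dirac_apply' _ (by trivial)]
  simp [Set.indicator]

/-- Lower bound: for even `0 < n ≤ N`, `P(Y ≥ n) ≥ (1-p)^(n/2)`. -/
theorem stmt9 (p : ℝ) (hp0 : 0 < p) (hp1 : p < 1) (N n : ℕ)
    (hn0 : 0 < n) (hnN : n ≤ N) (hne : Even n) :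
    (1 - p) ^ (n / 2) ≤ (prodBern p N {ω | n ≤ Ycount N ω}).toReal := by
  haveI : IsProbabilityMeasure (bern p) := bern_isProb_s9 p hp0.le hp1.le
  haveI : IsProbabilityMeasure (prodBern p N) := by
    unfold prodBern; infer_instance
  set k := n / 2 with hk
  have hkn : 2 * k = n := by
    have := hne.two_dvd
    omega
  have hkN : k < N + 1 := by omega
  -- the fringe event
  set s : Fin (N + 1) → Set Bool := fun i => if (i : ℕ) < k then {false} else Set.univ with hs
  have hsub : Set.pi Set.univ s ⊆ {ω | n ≤ Ycount N ω} := by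
    intro ω hω
    have hωf : ∀ i : Fin (N + 1), (i : ℕ) < k → ω i = false := by
      intro i hi
      have := hω i (Set.mem_univ i)
      simp only [hs, if_pos hi, Set.mem_singleton_iff] at this
      exact this
    have hT : Set.Iio n ⊆ {m : ℕ | m ≤ N ∧ ¬ inSumset ω m} := by
      intro m hm
      simp only [Set.mem_Iio] at hm
      refine ⟨by omega, ?_⟩
      rintro ⟨a, b, ha, hb, hab⟩
      have : (a : ℕ) < k ∨ (b : ℕ) < k := by omega
      rcases this with h | h
      · rw [hωf a h] at ha; exact Bool.false_ne_true ha
      · rw [hωf b h] at hb; exact Bool.false_ne_true hb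
    have hfin : ({m : ℕ | m ≤ N ∧ ¬ inSumset ω m}).Finite :=
      (Set.finite_Iic N).subset (fun m hm => hm.1)
    have hle : (Set.Iio n).ncard ≤ ({m : ℕ | m ≤ N ∧ ¬ inSumset ω m}).ncard :=
      Set.ncard_le_ncard hT hfin
    have : (Set.Iio n).ncard = n := by
      rw [← Finset.coe_range, Set.ncard_coe_finset, Finset.card_range]
    simpa [Ycount, this] using hle
  -- probability of the fringe event
  have hmeas : prodBern p N (Set.pi Set.univ s) = ENNReal.ofReal ((1 - p) ^ k) := by
    rw [prodBern, Measure.pi_pi]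
    have : ∀ i : Fin (N + 1), bern p (s i) =
        if (i : ℕ) < k then ENNReal.ofReal (1 - p) else 1 := by
      intro i
      by_cases h : (i : ℕ) < k
      · simp [hs, h, bern_false]
      · simp only [hs, if_neg h]; exact measure_univ
    rw [Finset.prod_congr rfl (fun i _ => this i)]
    rw [Finset.prod_ite, Finset.prod_const, Finset.prod_const, one_pow, mul_one]
    have hcard : (Finset.filter (fun i : Fin (N + 1) => (i : ℕ) < k) Finset.univ).card = k := by
      have : (Finset.filter (fun i : Fin (N + 1) => (i : ℕ) < k) Finset.univ)
          = Finset.Iio (⟨k, hkN⟩ : Fin (N + 1)) := by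
        ext i
        simp [Finset.mem_Iio, Fin.lt_def]
      rw [this, Fin.card_Iio]
    rw [hcard, ← ENNReal.ofReal_pow (by linarith)]
  have hle : ENNReal.ofReal ((1 - p) ^ k) ≤ prodBern p N {ω | n ≤ Ycount N ω} := by
    rw [← hmeas]; exact measure_mono hsub
  calc (1 - p) ^ k = (ENNReal.ofReal ((1 - p) ^ k)).toReal := by
        rw [ENNReal.toReal_ofReal (pow_nonneg (by linarith) k)]
    _ ≤ (prodBern p N {ω | n ≤ Ycount N ω}).toReal :=
        ENNReal.toReal_mono (measure_ne_top _ _) hle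
end

section
/- For every integer k ≥ 1, a_k = ((1 − λ₂)·λ₁^k − (1 − λ₁)·λ₂^k)/(λ₁ − λ₂); consequently, since λ₂ < λ₁, the inequalities λ₁^k < a_k ≤ λ₁^{k−1} hold for every k ≥ 1. -/
open MeasureTheory Filter

-- auxiliary
lemma bern_singleton (p : ℝ) (b : Bool) :
    bern p {b} = ENNReal.ofReal (if b then p else 1 - p) := by
  cases b <;> simp [bern, Measure.dirac_apply]

instance (p : ℝ) : IsFiniteMeasure (bern p) := by
  constructor
  simp [bern]

lemma measure_eq_sum' {α : Type*} [Finite α] [MeasurableSpace α] [MeasurableSingletonClass α]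
    (μ : Measure α) (S : Set α) :
    μ S = ∑ x ∈ (Set.toFinite S).toFinset, μ {x} := by
  have h : S = ⋃ x ∈ (Set.toFinite S).toFinset, {x} := by simp
  nth_rewrite 1 [h]
  rw [measure_biUnion_finset]
  · intro x _ y _ hxy
    simp [Function.onFun, Set.disjoint_singleton, hxy]
  · intro b _; exact measurableSet_singleton b

noncomputable def wB (p : ℝ) (b : Bool) : ℝ := if b then p else 1 - p

open Classical in
noncomputable def Aseq (p : ℝ) (k : ℕ) : ℝ :=
  ∑ x : Fin k → Bool, if noTwoOnes x then (∏ i, wB p (x i)) else 0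

lemma wB_nonneg {p : ℝ} (h0 : 0 ≤ p) (h1 : p ≤ 1) (b : Bool) : 0 ≤ wB p b := by
  cases b <;> simp [wB] <;> linarith

lemma aseq_eq_Aseq (p : ℝ) (h0 : 0 ≤ p) (h1 : p ≤ 1) (k : ℕ) :
    aseq p k = Aseq p k := by
  classical
  rw [aseq, measure_eq_sum']
  rw [ENNReal.toReal_sum (fun a _ => measure_ne_top _ _)]
  have hsing : ∀ x : Fin k → Bool,
      ((Measure.pi fun _ : Fin k => bern p) {x}).toReal = ∏ i, wB p (x i) := by
    intro x
    rw [← Set.univ_pi_singleton x, Measure.pi_pi]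
    have : ∀ i : Fin k, bern p {x i} = ENNReal.ofReal (wB p (x i)) := by
      intro i; rw [bern_singleton]; rfl
    simp_rw [this]
    rw [← ENNReal.ofReal_prod_of_nonneg (fun i _ => wB_nonneg h0 h1 (x i))]
    rw [ENNReal.toReal_ofReal (Finset.prod_nonneg fun i _ => wB_nonneg h0 h1 (x i))]
  simp_rw [hsing]
  rw [Aseq, ← Finset.sum_filter]
  apply Finset.sum_congr _ (fun _ _ => rfl)
  ext x
  simp [Set.Finite.mem_toFinset]

-- cons lemmas
lemma cons_succ_mk {k : ℕ} (b : Bool) (y : Fin k → Bool) (i : ℕ) (h : i < k) :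
    (Fin.cons b y : Fin (k + 1) → Bool) ⟨i + 1, Nat.succ_lt_succ h⟩ = y ⟨i, h⟩ :=
  by
  have e : (⟨i + 1, Nat.succ_lt_succ h⟩ : Fin (k + 1)) = Fin.succ ⟨i, h⟩ := rfl
  rw [e]
  exact Fin.cons_succ (α := fun _ => Bool) b y ⟨i, h⟩

lemma cons_zero_mk {k : ℕ} (b : Bool) (y : Fin k → Bool) (h : 0 < k + 1) :
    (Fin.cons b y : Fin (k + 1) → Bool) ⟨0, h⟩ = b :=
  by
  have e : (⟨0, h⟩ : Fin (k + 1)) = 0 := rfl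
  rw [e]
  exact Fin.cons_zero (α := fun _ => Bool) b y

lemma noTwoOnes_cons_false {k : ℕ} (y : Fin k → Bool) :
    noTwoOnes (Fin.cons false y : Fin (k + 1) → Bool) ↔ noTwoOnes y := by
  constructor
  · intro h i hi
    have := h (i + 1) (Nat.succ_lt_succ hi)
    rwa [cons_succ_mk false y i (Nat.lt_of_succ_lt hi), cons_succ_mk false y (i+1) hi] at this
  · intro h i hi
    match i with
    | 0 =>
      rw [cons_zero_mk]
      simp
    | Nat.succ j =>
      have hj : j + 1 < k := by omega
      rw [cons_succ_mk false y j (by omega), cons_succ_mk false y (j+1) hj]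
      exact h j hj

lemma noTwoOnes_cons_true {k : ℕ} (y : Fin (k + 1) → Bool) :
    noTwoOnes (Fin.cons true y : Fin (k + 2) → Bool) ↔ noTwoOnes y ∧ y 0 = false := by
  constructor
  · intro h
    constructor
    · intro i hi
      have := h (i + 1) (Nat.succ_lt_succ hi)
      rwa [cons_succ_mk true y i (Nat.lt_of_succ_lt hi), cons_succ_mk true y (i+1) hi] at this
    · have := h 0 (by omega)
      rw [cons_zero_mk, cons_succ_mk true y 0 (by omega)] at this
      have h0 : (⟨0, Nat.succ_pos k⟩ : Fin (k+1)) = 0 := rfl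
      rw [h0] at this
      simpa using this
  · rintro ⟨h, h0⟩ i hi
    match i with
    | 0 =>
      rw [cons_zero_mk, cons_succ_mk true y 0 (by omega)]
      have h0' : (⟨0, Nat.succ_pos k⟩ : Fin (k+1)) = 0 := rfl
      rw [h0']
      simp [h0]
    | Nat.succ j =>
      have hj : j + 1 < k + 1 := by omega
      rw [cons_succ_mk true y j (by omega), cons_succ_mk true y (j+1) hj]
      exact h j hj

lemma sum_cons_decomp {k : ℕ} (g : (Fin (k + 1) → Bool) → ℝ) :
    ∑ x : Fin (k + 1) → Bool, g x = ∑ b : Bool, ∑ y : Fin k → Bool, g (Fin.cons b y) := by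
  calc ∑ x : Fin (k + 1) → Bool, g x
      = ∑ bz : Bool × (Fin k → Bool), g ((Fin.consEquiv fun _ => Bool) bz) :=
        ((Fin.consEquiv fun _ => Bool).sum_comp g).symm
    _ = ∑ b : Bool, ∑ y : Fin k → Bool, g (Fin.cons b y) := by
        rw [Fintype.sum_prod_type]
        rfl

lemma prod_wB_cons (p : ℝ) {k : ℕ} (b : Bool) (y : Fin k → Bool) :
    ∏ i, wB p ((Fin.cons b y : Fin (k + 1) → Bool) i) = wB p b * ∏ i, wB p (y i) := by
  rw [Fin.prod_univ_succ]
  simp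

open Classical in
noncomputable def Dseq (p : ℝ) (k : ℕ) : ℝ :=
  ∑ y : Fin (k + 1) → Bool, if noTwoOnes y ∧ y 0 = false then (∏ i, wB p (y i)) else 0

lemma Aseq_zero (p : ℝ) : Aseq p 0 = 1 := by
  classical
  rw [Aseq]
  rw [Fintype.sum_unique]
  simp [noTwoOnes]

lemma Aseq_one (p : ℝ) : Aseq p 1 = 1 := by
  classical
  have h : ∀ x : Fin 1 → Bool, noTwoOnes x := fun x i hi => absurd hi (by omega)
  calc Aseq p 1 = ∑ x : Fin 1 → Bool, ∏ i, wB p (x i) := by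
        rw [Aseq]; exact Finset.sum_congr rfl fun x _ => if_pos (h x)
    _ = ∑ b : Bool, wB p b :=
        Fintype.sum_equiv (Equiv.funUnique (Fin 1) Bool) _ _ (fun x => by
          simp [Equiv.funUnique])
    _ = 1 := by rw [Fintype.sum_bool]; simp [wB]

lemma Dseq_eq (p : ℝ) (k : ℕ) : Dseq p k = (1 - p) * Aseq p k := by
  classical
  rw [Dseq, sum_cons_decomp]
  have htrue : ∀ y : Fin k → Bool,
      (if noTwoOnes (Fin.cons true y : Fin (k+1) → Bool) ∧
          (Fin.cons true y : Fin (k+1) → Bool) 0 = false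
        then (∏ i, wB p ((Fin.cons true y : Fin (k+1) → Bool) i)) else 0) = 0 := by
    intro y
    rw [if_neg]
    rintro ⟨-, h⟩
    simp at h
  have hfalse : ∀ y : Fin k → Bool,
      (if noTwoOnes (Fin.cons false y : Fin (k+1) → Bool) ∧
          (Fin.cons false y : Fin (k+1) → Bool) 0 = false
        then (∏ i, wB p ((Fin.cons false y : Fin (k+1) → Bool) i)) else 0)
      = (1 - p) * (if noTwoOnes y then (∏ i, wB p (y i)) else 0) := by
    intro y
    rw [prod_wB_cons]
    by_cases h : noTwoOnes y
    · rw [if_pos ⟨(noTwoOnes_cons_false y).2 h, by simp⟩, if_pos h]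
      simp [wB]
    · rw [if_neg, if_neg h, mul_zero]
      rintro ⟨h', -⟩
      exact h ((noTwoOnes_cons_false y).1 h')
  rw [Fintype.sum_bool]
  simp_rw [htrue, hfalse]
  rw [Finset.sum_const, smul_zero, zero_add, ← Finset.mul_sum, Aseq]

lemma Aseq_rec (p : ℝ) (k : ℕ) :
    Aseq p (k + 2) = (1 - p) * Aseq p (k + 1) + p * (1 - p) * Aseq p k := by
  classical
  rw [show Aseq p (k+2) = ∑ x : Fin (k + 2) → Bool,
      if noTwoOnes x then (∏ i, wB p (x i)) else 0 from rfl, sum_cons_decomp]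
  have htrue : ∀ y : Fin (k+1) → Bool,
      (if noTwoOnes (Fin.cons true y : Fin (k+2) → Bool)
        then (∏ i, wB p ((Fin.cons true y : Fin (k+2) → Bool) i)) else 0)
      = p * (if noTwoOnes y ∧ y 0 = false then (∏ i, wB p (y i)) else 0) := by
    intro y
    rw [prod_wB_cons]
    by_cases h : noTwoOnes y ∧ y 0 = false
    · rw [if_pos ((noTwoOnes_cons_true y).2 h), if_pos h]
      simp [wB]
    · rw [if_neg (fun h' => h ((noTwoOnes_cons_true y).1 h')), if_neg h, mul_zero]
  have hfalse : ∀ y : Fin (k+1) → Bool,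
      (if noTwoOnes (Fin.cons false y : Fin (k+2) → Bool)
        then (∏ i, wB p ((Fin.cons false y : Fin (k+2) → Bool) i)) else 0)
      = (1 - p) * (if noTwoOnes y then (∏ i, wB p (y i)) else 0) := by
    intro y
    rw [prod_wB_cons]
    by_cases h : noTwoOnes y
    · rw [if_pos ((noTwoOnes_cons_false y).2 h), if_pos h]
      simp [wB]
    · rw [if_neg (fun h' => h ((noTwoOnes_cons_false y).1 h')), if_neg h, mul_zero]
  rw [Fintype.sum_bool]
  simp_rw [htrue, hfalse]
  rw [← Finset.mul_sum, ← Finset.mul_sum]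
  rw [show (∑ y : Fin (k+1) → Bool, if noTwoOnes y ∧ y 0 = false
      then (∏ i, wB p (y i)) else 0) = Dseq p k from rfl, Dseq_eq]
  rw [show (∑ y : Fin (k+1) → Bool, if noTwoOnes y
      then (∏ i, wB p (y i)) else 0) = Aseq p (k+1) from rfl]
  ring


/-- Binet-type formula for `a_k` and the bounds `λ₁^k < a_k ≤ λ₁^(k-1)`. -/
theorem stmt11 (p : ℝ) (hp0 : 0 < p) (hp1 : p < 1) (l1 l2 : ℝ)
    (hl1 : l1 = (1 - p + Real.sqrt ((1 - p) * (1 + 3 * p))) / 2)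
    (hl2 : l2 = (1 - p - Real.sqrt ((1 - p) * (1 + 3 * p))) / 2)
    (k : ℕ) (hk : 1 ≤ k) :
    aseq p k = ((1 - l2) * l1 ^ k - (1 - l1) * l2 ^ k) / (l1 - l2) ∧
    l1 ^ k < aseq p k ∧ aseq p k ≤ l1 ^ (k - 1) := by
  have hp0' : (0:ℝ) ≤ p := hp0.le
  have hp1' : p ≤ 1 := hp1.le
  set s := Real.sqrt ((1 - p) * (1 + 3 * p)) with hs
  have hqq : 0 < (1 - p) * (1 + 3 * p) := by nlinarith
  have hs2 : s ^ 2 = (1 - p) * (1 + 3 * p) := Real.sq_sqrt hqq.le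
  have hspos : 0 < s := Real.sqrt_pos.2 hqq
  have hdiff : l1 - l2 = s := by rw [hl1, hl2]; ring
  have hsum : l1 + l2 = 1 - p := by rw [hl1, hl2]; ring
  have hprodl : l1 * l2 = -(p * (1 - p)) := by
    have e : l1 * l2 = ((1-p)^2 - s^2)/4 := by rw [hl1, hl2]; ring
    rw [e, hs2]; ring
  have hq1 : l1 ^ 2 = (1 - p) * l1 + p * (1 - p) := by
    linear_combination l1 * hsum - hprodl
  have hq2 : l2 ^ 2 = (1 - p) * l2 + p * (1 - p) := by
    linear_combination l2 * hsum - hprodl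
  have hd : 0 < l1 - l2 := by rw [hdiff]; exact hspos
  have hne : l1 - l2 ≠ 0 := hd.ne'
  have key : ∀ m, aseq p m * (l1 - l2) = (1 - l2) * l1 ^ m - (1 - l1) * l2 ^ m := by
    intro m
    induction m using Nat.strong_induction_on with
    | _ m ih =>
      match m with
      | 0 => rw [aseq_eq_Aseq p hp0' hp1', Aseq_zero]; ring
      | 1 => rw [aseq_eq_Aseq p hp0' hp1', Aseq_one]; ring
      | (m+2) =>
        rw [aseq_eq_Aseq p hp0' hp1', Aseq_rec, ← aseq_eq_Aseq p hp0' hp1',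
          ← aseq_eq_Aseq p hp0' hp1']
        have h1 := ih (m+1) (by omega)
        have h0 := ih m (by omega)
        linear_combination (1-p) * h1 + p*(1-p) * h0 - ((1-l2)*l1^m) * hq1
          + ((1-l1)*l2^m) * hq2
  have hform : aseq p k = ((1 - l2) * l1 ^ k - (1 - l1) * l2 ^ k) / (l1 - l2) := by
    rw [eq_div_iff hne]; exact key k
  have hl1pos : 0 < l1 := by rw [hl1]; nlinarith
  have hl1lt1 : l1 < 1 := by
    rw [hl1]
    nlinarith [sq_nonneg (s - (1 + p))]
  have hl2neg : l2 < 0 := by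
    rw [hl2]
    nlinarith [sq_nonneg (s - (1 - p))]
  have habs : |l2| < l1 := abs_lt.2 ⟨by linarith, by linarith⟩
  have hpowle : ∀ m, l2 ^ m ≤ l1 ^ m := by
    intro m
    calc l2 ^ m ≤ |l2 ^ m| := le_abs_self _
      _ = |l2| ^ m := abs_pow l2 m
      _ ≤ l1 ^ m := pow_le_pow_left₀ (abs_nonneg _) habs.le m
  have hpowlt : ∀ m, 1 ≤ m → l2 ^ m < l1 ^ m := by
    intro m hm
    calc l2 ^ m ≤ |l2| ^ m := (abs_pow l2 m) ▸ le_abs_self _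
      _ < l1 ^ m := pow_lt_pow_left₀ habs (abs_nonneg _) (by omega)
  refine ⟨hform, ?_, ?_⟩
  · have e : (aseq p k - l1 ^ k) * (l1 - l2) = (1 - l1) * (l1 ^ k - l2 ^ k) := by
      linear_combination key k
    have hpos : 0 < (1 - l1) * (l1 ^ k - l2 ^ k) :=
      mul_pos (by linarith) (sub_pos.2 (hpowlt k hk))
    nlinarith [e, hpos, hd]
  · obtain ⟨m, rfl⟩ : ∃ m, k = m + 1 := ⟨k - 1, (Nat.succ_pred_eq_of_pos hk).symm⟩
    rw [Nat.add_sub_cancel]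
    have e : (l1 ^ m - aseq p (m + 1)) * (l1 - l2) = (1 - l1) * (-l2) * (l1 ^ m - l2 ^ m) := by
      linear_combination (-1 : ℝ) * key (m + 1)
    have hpos : 0 ≤ (1 - l1) * (-l2) * (l1 ^ m - l2 ^ m) :=
      mul_nonneg (mul_nonneg (by linarith) (by linarith)) (sub_nonneg.2 (hpowle m))
    nlinarith [e, hpos, hd]
end

section
/- Let α and β be real numbers with |α| < 1 and |β| < 1, and let k and l be integers with 0 ≤ k < l. Then Σ_{n=0}^{∞} α^n · β^{⌊((l−1)n + k)/l⌋} = (1/(1 − αβ)) · (1 + α^{k+1}·β^k·(1 − β)/(1 − α^l·β^{l−1})). -/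
/-!
Write `e n = ⌊((l - 1) n + k) / l⌋` and `f n = a ^ n * b ^ (e n)`. Since
`e (n + l) = e n + (l - 1)`, the summand satisfies `f (n + l) = a ^ l b ^ (l - 1) f n`, so the
series equals its first `l` terms divided by `1 - a ^ l b ^ (l - 1)`. For `0 ≤ r < l` we have
`e r = r` when `r ≤ k` and `e r = r - 1` when `r > k`, so those `l` terms form two geometric
progressions of ratio `a b`.
-/

open MeasureTheory Filter

theorem tsum_eq_sum_range_div_of_add_eq_mul {K : Type*} [Field K] [TopologicalSpace K]
    [IsTopologicalRing K] [T2Space K] {f : ℕ → K} (hf : Summable f) {p : ℕ} {c : K}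
    (hc : c ≠ 1) (hfp : ∀ n, f (n + p) = c * f n) :
    ∑' n, f n = (∑ i ∈ Finset.range p, f i) / (1 - c) := by
  have h := hf.sum_add_tsum_nat_add p
  simp only [hfp, hf.tsum_mul_left] at h
  rw [eq_div_iff (sub_ne_zero.mpr hc.symm)]
  linear_combination -h

namespace FloorExponent

variable {k l : ℕ}

theorem add_period (hl : 0 < l) (n : ℕ) :
    ((l - 1) * (n + l) + k) / l = ((l - 1) * n + k) / l + (l - 1) := by
  rw [show (l - 1) * (n + l) + k = (l - 1) * n + k + (l - 1) * l by ring,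
    Nat.add_mul_div_right _ _ hl]

theorem of_le (hkl : k < l) {r : ℕ} (hr : r ≤ k) : ((l - 1) * r + k) / l = r := by
  obtain ⟨m, rfl⟩ : ∃ m, l = m + 1 := ⟨l - 1, by omega⟩
  simp only [Nat.add_sub_cancel]
  apply Nat.div_eq_of_lt_le <;> nlinarith

theorem of_lt (hkl : k < l) {r : ℕ} (hkr : k < r) (hrl : r < l) :
    ((l - 1) * r + k) / l = r - 1 := by
  obtain ⟨s, rfl⟩ : ∃ s, r = s + 1 := ⟨r - 1, by omega⟩
  obtain ⟨m, rfl⟩ : ∃ m, l = m + 1 := ⟨l - 1, by omega⟩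
  simp only [Nat.add_sub_cancel]
  apply Nat.div_eq_of_lt_le <;> nlinarith

end FloorExponent

open Finset in
theorem one_sub_mul_mul_sum_range_floor {R : Type*} [CommRing R] (a b : R) {k l : ℕ}
    (hkl : k < l) :
    (1 - a * b) * ∑ r ∈ range l, a ^ r * b ^ (((l - 1) * r + k) / l) =
      1 - a ^ l * b ^ (l - 1) + a ^ (k + 1) * b ^ k * (1 - b) := by
  obtain ⟨j, rfl⟩ : ∃ j, l = k + 1 + j := ⟨l - (k + 1), by omega⟩
  have head : ∑ r ∈ range (k + 1), a ^ r * b ^ (((k + 1 + j - 1) * r + k) / (k + 1 + j)) =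
      ∑ r ∈ range (k + 1), (a * b) ^ r := by
    refine sum_congr rfl fun r hr => ?_
    rw [FloorExponent.of_le (by omega) (by simpa [Nat.lt_succ_iff] using hr), mul_pow]
  have tail : ∑ i ∈ range j,
        a ^ (k + 1 + i) * b ^ (((k + 1 + j - 1) * (k + 1 + i) + k) / (k + 1 + j)) =
      a ^ (k + 1) * b ^ k * ∑ i ∈ range j, (a * b) ^ i := by
    rw [mul_sum]
    refine sum_congr rfl fun i hi => ?_
    rw [FloorExponent.of_lt (by omega) (by omega) (by simpa using hi),
      show k + 1 + i - 1 = k + i by omega]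
    ring
  rw [sum_range_add, head, tail, mul_add, mul_neg_geom_sum, mul_left_comm, mul_neg_geom_sum,
    show k + 1 + j - 1 = k + j by omega]
  ring

theorem abs_pow_mul_pow_le {a b : ℝ} (hb : |b| ≤ 1) (n m : ℕ) :
    |a ^ n * b ^ m| ≤ |a| ^ n := by
  rw [abs_mul, abs_pow, abs_pow]
  exact mul_le_of_le_one_right (by positivity) (pow_le_one₀ (abs_nonneg b) hb)

theorem pow_mul_pow_ne_one {a b : ℝ} (ha : |a| < 1) (hb : |b| ≤ 1) {n : ℕ} (hn : n ≠ 0)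
    (m : ℕ) : a ^ n * b ^ m ≠ 1 := fun h => by
  have := (abs_pow_mul_pow_le hb n m).trans_lt (pow_lt_one₀ (abs_nonneg a) ha hn)
  simp [h] at this

/-- Floor-geometric sum: for `|α|, |β| < 1` and integers `0 ≤ k < l`,
`Σ_{n≥0} α^n β^⌊((l-1)n+k)/l⌋ = (1/(1-αβ))(1 + α^{k+1}β^k(1-β)/(1-α^l β^{l-1}))`. -/
theorem stmt17 (a b : ℝ) (ha : |a| < 1) (hb : |b| < 1) (k l : ℕ) (hkl : k < l) :
    ∑' n : ℕ, a ^ n * b ^ (((l - 1) * n + k) / l) =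
      1 / (1 - a * b) *
        (1 + a ^ (k + 1) * b ^ k * (1 - b) / (1 - a ^ l * b ^ (l - 1))) := by
  have hab : a * b ≠ 1 := by simpa using pow_mul_pow_ne_one ha hb.le one_ne_zero 1
  have hx : a ^ l * b ^ (l - 1) ≠ 1 := pow_mul_pow_ne_one ha hb.le (by omega) (l - 1)
  have hsum : Summable fun n : ℕ => a ^ n * b ^ (((l - 1) * n + k) / l) :=
    .of_norm_bounded (summable_geometric_of_lt_one (abs_nonneg a) ha)
      fun n => abs_pow_mul_pow_le hb.le n _
  have hperiod (n : ℕ) : a ^ (n + l) * b ^ (((l - 1) * (n + l) + k) / l) =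
      a ^ l * b ^ (l - 1) * (a ^ n * b ^ (((l - 1) * n + k) / l)) := by
    rw [FloorExponent.add_period (by omega), pow_add, pow_add]
    ring
  have hfinite := one_sub_mul_mul_sum_range_floor a b hkl
  rw [mul_comm] at hfinite
  rw [tsum_eq_sum_range_div_of_add_eq_mul hsum hx hperiod,
    eq_div_of_mul_eq (sub_ne_zero.mpr hab.symm) hfinite]
  field_simp [sub_ne_zero.mpr hx.symm]
end
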